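/- arXiv:2505.21627 — 4 statements merged into one kernel-verified Lean document; each statement's English description precedes it below -/
import Mathlib

section
/- Let V be a finite vocabulary of tokens, each token being a nonempty string over an alphabet Σ with Σ ⊆ V (every single character is a token). Let r : V → ℝ≥0 be a per-token price and extend r additively to token sequences. Suppose the pricing is incentive-compatible in the sense that any two token sequences whose concatenations yield the same string receive the same total price. Then for every token sequence t = (t₁,…,t_k), the total price equals Σ_{σ ∈ Σ} count_σ(str(t)) · r(σ), where count_σ(s) is the number of occurrences of character σ in the string s. -/
theorem stmt0 {α : Type*} [Fintype α] [DecidableEq α]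
    (V : Set (List α)) (r : List α → ℝ)
    (hV : ∀ t ∈ V, t ≠ []) (hSig : ∀ a : α, [a] ∈ V)
    (hr : ∀ t ∈ V, 0 ≤ r t)
    (hIC : ∀ ts ts' : List (List α), (∀ t ∈ ts, t ∈ V) → (∀ t ∈ ts', t ∈ V) →
      ts.flatten = ts'.flatten → (ts.map r).sum = (ts'.map r).sum)
    (ts : List (List α)) (hts : ∀ t ∈ ts, t ∈ V) :
    (ts.map r).sum = ∑ σ : α, (ts.flatten.count σ : ℝ) * r [σ] := by
  have hjoin : (ts.flatten.map (fun a => [a])).flatten = ts.flatten := by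
    induction ts.flatten with
    | nil => rfl
    | cons a l ih => simp [ih]
  have h1 : (ts.map r).sum = ((ts.flatten.map (fun a => [a])).map r).sum := by
    apply hIC _ _ hts
    · intro t ht
      simp only [List.mem_map] at ht
      obtain ⟨a, _, rfl⟩ := ht
      exact hSig a
    · exact hjoin.symm
  rw [h1, List.map_map]
  rw [Finset.sum_list_map_count]
  rw [Finset.sum_subset (Finset.subset_univ ts.flatten.toFinset)]
  · simp [Function.comp, mul_comm]
  · intro x _ hx
    rw [List.count_eq_zero_of_not_mem (by simpa using hx)]
    simp
end

section
/- Let V be a finite vocabulary of tokens over an alphabet Σ with Σ ⊆ V, and suppose V contains at least one token whose string has length at least 2. Then there is no constant r₀ > 0 such that the pricing mechanism r(t) = r₀ · len(t) (price proportional to the number of tokens) is incentive-compatible, i.e., there exist two token sequences t, t' with str(t) = str(t') but r(t) ≠ r(t'). -/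
theorem stmt1 {α : Type*} (V : Set (List α))
    (hV : ∀ t ∈ V, t ≠ []) (hSig : ∀ a : α, [a] ∈ V)
    (hlong : ∃ t ∈ V, 2 ≤ t.length)
    (r₀ : ℝ) (hr₀ : 0 < r₀) :
    ∃ ts ts' : List (List α), (∀ t ∈ ts, t ∈ V) ∧ (∀ t ∈ ts', t ∈ V) ∧
      ts.flatten = ts'.flatten ∧ r₀ * ts.length ≠ r₀ * ts'.length := by
  obtain ⟨t, htV, hlen⟩ := hlong
  refine ⟨[t], t.map (fun a => [a]), ?_, ?_, ?_, ?_⟩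
  · simpa using htV
  · intro s hs
    simp only [List.mem_map] at hs
    obtain ⟨a, _, rfl⟩ := hs
    exact hSig a
  · clear htV hlen
    induction t with
    | nil => simp
    | cons a t ih => simpa using ih
  · have h1 : ([t] : List (List α)).length = 1 := rfl
    have h2 : (t.map (fun a => [a])).length = t.length := List.length_map _
    rw [h1, h2]
    intro h
    have := mul_left_cancel₀ (ne_of_gt hr₀) h
    have : (1 : ℕ) = t.length := by exact_mod_cast this
    omega
end

section
/- Let V be a finite vocabulary over alphabet Σ with Σ ⊆ V, and let r : V → ℝ≥0 be additive. If r assigns the same price r_c > 0 to every single-character token and is incentive-compatible (prices depend only on the concatenated string), then r(t) = |str(t)| · r_c for every token sequence t, where |str(t)| is the number of characters of the concatenated string. In particular this pay-per-character mechanism is the unique additive incentive-compatible mechanism with uniform character prices. -/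
theorem stmt2 {α : Type*} (V : Set (List α)) (r : List α → ℝ) (r_c : ℝ)
    (hV : ∀ t ∈ V, t ≠ []) (hSig : ∀ a : α, [a] ∈ V)
    (hr : ∀ t ∈ V, 0 ≤ r t) (hrc : 0 < r_c)
    (hchar : ∀ a : α, r [a] = r_c)
    (hIC : ∀ ts ts' : List (List α), (∀ t ∈ ts, t ∈ V) → (∀ t ∈ ts', t ∈ V) →
      ts.flatten = ts'.flatten → (ts.map r).sum = (ts'.map r).sum)
    (ts : List (List α)) (hts : ∀ t ∈ ts, t ∈ V) :
    (ts.map r).sum = (ts.flatten.length : ℝ) * r_c := by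
  have key : ∀ l : List α, (l.map fun a => [a]).flatten = l := by
    intro l; induction l <;> simp_all
  have h := hIC ts (ts.flatten.map (fun a => [a])) hts
    (by
      intro t ht
      simp only [List.mem_map] at ht
      obtain ⟨a, _, rfl⟩ := ht
      exact hSig a)
    ((key ts.flatten).symm)
  rw [h, List.map_map]
  simp only [Function.comp_def, hchar]
  rw [List.map_const', List.sum_replicate, nsmul_eq_mul]
end

section
/- Let G be a directed graph on nodes {1,…,n}, n ≥ 1, 0 < δ < 1/(n+1), and ε = ((1−δ)/n)^n. Consider sequences (ν₁,…,ν_n) of nodes where the 'probability' of the sequence is defined as p(ν) = Πᵢ₌₁ⁿ wᵢ, with w₁ = (1−δ)/n and, for i ≥ 2, wᵢ = (1−δ)/n if νᵢ ∉ {ν₁,…,νᵢ₋₁} and (νᵢ₋₁, νᵢ) ∈ E, and wᵢ = δ otherwise. Then p(ν) ≥ ε if and only if (ν₁,…,ν_n) is a Hamiltonian path in G. -/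
theorem stmt12 (n : ℕ) (hn : 1 ≤ n) (E : ℕ → ℕ → Prop) (δ : ℝ)
    (h0 : 0 < δ) (h1 : δ < 1 / ((n : ℝ) + 1)) (ν : Fin n → ℕ)
    (hν : ∀ i, ν i ∈ Finset.Icc 1 n) (w : Fin n → ℝ)
    (hw0 : ∀ i : Fin n, i.val = 0 → w i = (1 - δ) / n)
    (hwg : ∀ i : Fin n, i.val ≠ 0 →
      ((∀ j : Fin n, j < i → ν j ≠ ν i) ∧
        E (ν ⟨i.val - 1, lt_of_le_of_lt (Nat.sub_le _ _) i.isLt⟩) (ν i)) →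
      w i = (1 - δ) / n)
    (hwb : ∀ i : Fin n, i.val ≠ 0 →
      ¬((∀ j : Fin n, j < i → ν j ≠ ν i) ∧
        E (ν ⟨i.val - 1, lt_of_le_of_lt (Nat.sub_le _ _) i.isLt⟩) (ν i)) →
      w i = δ) :
    (∏ i, w i) ≥ ((1 - δ) / n) ^ n ↔
      (Function.Injective ν ∧
        ∀ (i : Fin n) (h : i.val + 1 < n), E (ν i) (ν ⟨i.val + 1, h⟩)) := by
  have hn' : (0:ℝ) < n := by
    have : (1:ℝ) ≤ n := by exact_mod_cast hn
    linarith
  set c : ℝ := (1 - δ) / n with hcdef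
  have hδc : δ < c := by
    rw [hcdef, lt_div_iff₀ hn']
    have h1' : δ * ((n:ℝ) + 1) < 1 := by
      have := (lt_div_iff₀ (by linarith : (0:ℝ) < (n:ℝ)+1)).mp h1
      linarith
    nlinarith
  have hcpos : 0 < c := lt_trans h0 hδc
  have hwval : ∀ i, w i = δ ∨ w i = c := by
    intro i
    by_cases hi : i.val = 0
    · right; exact hw0 i hi
    · by_cases hcond : (∀ j : Fin n, j < i → ν j ≠ ν i) ∧
        E (ν ⟨i.val - 1, lt_of_le_of_lt (Nat.sub_le _ _) i.isLt⟩) (ν i)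
      · right; exact hwg i hi hcond
      · left; exact hwb i hi hcond
  constructor
  · intro hp
    have hall : ∀ i, w i = c := by
      intro i
      rcases hwval i with h | h
      · exfalso
        have hsplit : ∏ j, w j = w i * ∏ j ∈ Finset.univ.erase i, w j :=
          (Finset.mul_prod_erase Finset.univ w (Finset.mem_univ i)).symm
        have hle : ∏ j ∈ Finset.univ.erase i, w j ≤ c ^ (n - 1) := by
          have h2 : ∏ j ∈ Finset.univ.erase i, w j ≤
              ∏ _j ∈ Finset.univ.erase i, c := by
            apply Finset.prod_le_prod
            · intro j _
              rcases hwval j with h' | h' <;> rw [h'] <;> positivity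
            · intro j _
              rcases hwval j with h' | h'
              · rw [h']; exact le_of_lt hδc
              · rw [h']
          rwa [Finset.prod_const, Finset.card_erase_of_mem (Finset.mem_univ i),
            Finset.card_univ, Fintype.card_fin] at h2
        have hlt : ∏ j, w j < c ^ n := by
          rw [hsplit, h]
          calc δ * ∏ j ∈ Finset.univ.erase i, w j ≤ δ * c ^ (n - 1) := by
                apply mul_le_mul_of_nonneg_left hle (le_of_lt h0)
            _ < c * c ^ (n - 1) := by
                apply mul_lt_mul_of_pos_right hδc (by positivity)
            _ = c ^ ((n - 1) + 1) := (pow_succ' c (n - 1)).symm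
            _ = c ^ n := by congr 1; omega
        exact absurd hp (not_le.mpr hlt)
      · exact h
    have hcond : ∀ i : Fin n, i.val ≠ 0 → ((∀ j : Fin n, j < i → ν j ≠ ν i) ∧
        E (ν ⟨i.val - 1, lt_of_le_of_lt (Nat.sub_le _ _) i.isLt⟩) (ν i)) := by
      intro i hi
      by_contra h
      have := hwb i hi h
      rw [hall i] at this
      exact absurd this (ne_of_gt hδc)
    constructor
    · intro a b hab
      by_contra hne
      rcases lt_or_gt_of_ne hne with hlt | hlt
      · have hb : b.val ≠ 0 := by omega
        exact (hcond b hb).1 a hlt hab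
      · have ha : a.val ≠ 0 := by omega
        exact (hcond a ha).1 b hlt hab.symm
    · intro i h
      have hj : (⟨i.val + 1, h⟩ : Fin n).val ≠ 0 := by simp
      exact (hcond ⟨i.val + 1, h⟩ hj).2
  · rintro ⟨hinj, hedge⟩
    have hall : ∀ i, w i = c := by
      intro i
      by_cases hi : i.val = 0
      · exact hw0 i hi
      · apply hwg i hi
        constructor
        · intro j hj hne
          exact absurd (hinj hne) (ne_of_lt hj)
        · have hlt : (i.val - 1) + 1 < n := by omega
          have h2 := hedge ⟨i.val - 1, lt_of_le_of_lt (Nat.sub_le _ _) i.isLt⟩ hlt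
          have heq : (⟨(⟨i.val - 1, lt_of_le_of_lt (Nat.sub_le _ _) i.isLt⟩ : Fin n).val + 1, hlt⟩ : Fin n) = i := by
            apply Fin.ext; simp; omega
          rwa [heq] at h2
    have : ∏ i, w i = c ^ n := by
      rw [Finset.prod_congr rfl (fun i _ => hall i), Finset.prod_const,
        Finset.card_univ, Fintype.card_fin]
    rw [this]
end
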